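/- arXiv:2203.02383 — 2 statements merged into one kernel-verified Lean document; each statement's English description precedes it below -/
import Mathlib

section
/- Let {r_K}_{K>0} be a sequence of nonnegative reals satisfying r_K ≤ a/(γK) + bγ/K + c₁γ + c₂γ² for every K > 0 whenever 0 < γ ≤ 1/h, where a, b, c₁, c₂ ≥ 0 and h > 0. Then for every K > 0, choosing the stepsize γ = min{1/h, √(a/b), √(a/(c₁K)), (a/(c₂K))^{1/3}} yields r_K ≤ c·[(h·a + √(ab))/K + √(a·c₁/K) + (a²c₂)^{1/3}/K^{2/3}], where c > 0 is an absolute constant. -/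
/-! For `a > 0` take `γ = A / σ` with `A = a / K` and `σ = h A + T₁ + T₂ + T₃`, where `T₁, T₂, T₃`
are the last three terms of the claimed rate. Then `a / (γ K) = σ` exactly, while the remaining
three terms of the recursion become `T₁² / σ`, `T₂² / σ` and `T₃³ / σ²`, each at most the
corresponding `Tᵢ` since `Tᵢ ≤ σ`; this gives the rate with `c = 2`. For `a = 0` the right-hand
side of the recursion tends to `0` as `γ → 0⁺`, so `r_K ≤ 0`. -/

open Filter Topology

lemma pow_succ_div_pow_le_self {s σ : ℝ} (hs : 0 ≤ s) (hsσ : s ≤ σ) (n : ℕ) :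
    s ^ (n + 1) / σ ^ n ≤ s :=
  calc s ^ (n + 1) / σ ^ n = s * (s / σ) ^ n := by rw [div_pow, pow_succ']; ring
    _ ≤ s * 1 := by
      gcongr
      have hσ : 0 ≤ σ := hs.trans hsσ
      exact pow_le_one₀ (div_nonneg hs hσ) (div_le_one_of_le₀ hsσ hσ)
    _ = s := mul_one s

lemma rpow_one_third_div_rpow_two_thirds_pow_three {x K : ℝ} (hx : 0 ≤ x) (hK : 0 ≤ K) :
    (x ^ ((1 : ℝ) / 3) / K ^ ((2 : ℝ) / 3)) ^ 3 = x / K ^ 2 := by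
  rw [div_pow, ← Real.rpow_mul_natCast hx, ← Real.rpow_mul_natCast hK]
  norm_num

lemma nonpos_of_forall_le_stepsize {h b c₁ c₂ K r : ℝ} (hh : 0 < h)
    (hr : ∀ γ : ℝ, 0 < γ → γ ≤ 1 / h → r ≤ b * γ / K + c₁ * γ + c₂ * γ ^ 2) : r ≤ 0 := by
  have hlim : Tendsto (fun γ : ℝ ↦ b * γ / K + c₁ * γ + c₂ * γ ^ 2) (𝓝[>] 0) (𝓝 0) := by
    have hcont : Continuous (fun γ : ℝ ↦ b * γ / K + c₁ * γ + c₂ * γ ^ 2) := by fun_prop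
    simpa using (hcont.tendsto 0).mono_left nhdsWithin_le_nhds
  refine ge_of_tendsto hlim ?_
  filter_upwards [Ioc_mem_nhdsGT (one_div_pos.2 hh)] with γ hγ using hr γ hγ.1 hγ.2

lemma le_two_mul_rate_of_forall_le_stepsize {h a b c₁ c₂ K r : ℝ} (hh : 0 < h) (ha : 0 < a)
    (hb : 0 ≤ b) (hc₁ : 0 ≤ c₁) (hc₂ : 0 ≤ c₂) (hK : 0 < K)
    (hr : ∀ γ : ℝ, 0 < γ → γ ≤ 1 / h → r ≤ a / (γ * K) + b * γ / K + c₁ * γ + c₂ * γ ^ 2) :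
    r ≤ 2 * ((h * a + √(a * b)) / K + √(a * c₁ / K)
      + (a ^ 2 * c₂) ^ ((1 : ℝ) / 3) / K ^ ((2 : ℝ) / 3)) := by
  set A := a / K
  set T₁ := √(a * b) / K
  set T₂ := √(a * c₁ / K)
  set T₃ := (a ^ 2 * c₂) ^ ((1 : ℝ) / 3) / K ^ ((2 : ℝ) / 3)
  set σ := h * A + T₁ + T₂ + T₃
  have hT₁ : 0 ≤ T₁ := by positivity
  have hT₂ : 0 ≤ T₂ := by positivity
  have hT₃ : 0 ≤ T₃ := by positivity
  have hhA : 0 < h * A := by positivity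
  have hσ : 0 < σ := by positivity
  have hT₁σ : T₁ ≤ σ := by linarith
  have hT₂σ : T₂ ≤ σ := by linarith
  have hT₃σ : T₃ ≤ σ := by linarith
  have hT₁sq : T₁ ^ 2 = a * b / K ^ 2 := by rw [div_pow, Real.sq_sqrt (by positivity)]
  have hT₂sq : T₂ ^ 2 = a * c₁ / K := Real.sq_sqrt (by positivity)
  have hT₃cube : T₃ ^ 3 = a ^ 2 * c₂ / K ^ 2 :=
    rpow_one_third_div_rpow_two_thirds_pow_three (by positivity) hK.le
  have hγ : A / σ ≤ 1 / h := by
    rw [div_le_div_iff₀ hσ hh]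
    linarith [mul_comm A h]
  calc r ≤ a / (A / σ * K) + b * (A / σ) / K + c₁ * (A / σ) + c₂ * (A / σ) ^ 2 :=
        hr _ (by positivity) hγ
    _ = σ + T₁ ^ (1 + 1) / σ ^ 1 + T₂ ^ (1 + 1) / σ ^ 1 + T₃ ^ (2 + 1) / σ ^ 2 := by
        simp only [Nat.reduceAdd, pow_one, hT₁sq, hT₂sq, hT₃cube, A]
        field_simp
    _ ≤ σ + T₁ + T₂ + T₃ := by
        gcongr
        · exact pow_succ_div_pow_le_self hT₁ hT₁σ 1
        · exact pow_succ_div_pow_le_self hT₂ hT₂σ 1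
        · exact pow_succ_div_pow_le_self hT₃ hT₃σ 2
    _ ≤ 2 * ((h * a + √(a * b)) / K + T₂ + T₃) := by
        simp only [σ, A, T₁]
        rw [add_div, mul_div_assoc]
        linarith

/-- Lemma I.3 of Gorbunov et al. (2021). If a nonnegative sequence satisfies
`r_K ≤ a/(γK) + bγ/K + c₁γ + c₂γ²` for every `K > 0` and every stepsize `0 < γ ≤ 1/h`, then
(choosing `γ = min{1/h, √(a/b), √(a/(c₁K)), (a/(c₂K))^{1/3}}`) one gets, for every `K > 0`,
`r_K ≤ c·[(ha + √(ab))/K + √(a c₁/K) + (a²c₂)^{1/3}/K^{2/3}]` for an absolute constant `c`. -/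
theorem lemma_rate_convex :
    ∃ c : ℝ, 0 < c ∧
      ∀ (h a b c1 c2 : ℝ) (r : ℕ → ℝ),
        0 < h → 0 ≤ a → 0 ≤ b → 0 ≤ c1 → 0 ≤ c2 →
        (∀ K, 0 ≤ r K) →
        (∀ γ : ℝ, 0 < γ → γ ≤ 1 / h → ∀ K : ℕ, 0 < K →
          r K ≤ a / (γ * K) + b * γ / K + c1 * γ + c2 * γ ^ 2) →
        ∀ K : ℕ, 0 < K →
          r K ≤ c * ((h * a + Real.sqrt (a * b)) / K + Real.sqrt (a * c1 / K)
              + (a ^ 2 * c2) ^ ((1 : ℝ) / 3) / (K : ℝ) ^ ((2 : ℝ) / 3)) := by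
  refine ⟨2, two_pos, fun h a b c1 c2 r hh ha hb hc1 hc2 _ hr K hK ↦ ?_⟩
  have hKpos : (0 : ℝ) < K := Nat.cast_pos.2 hK
  rcases ha.eq_or_lt with rfl | ha
  · have hrK : r K ≤ 0 := nonpos_of_forall_le_stepsize hh fun γ hγ hγh ↦ by
      simpa using hr γ hγ hγh K hK
    exact hrK.trans (by positivity)
  · exact le_two_mul_rate_of_forall_le_stepsize hh ha hb hc1 hc2 hKpos
      fun γ hγ hγh ↦ hr γ hγ hγh K hK
end

section
/- Let f_1, …, f_m: ℝ^d → ℝ be convex and differentiable, with each f_j being L_j-smooth with L_j > 0, and set F(x) = (1/m)Σ_{j=1}^m f_j(x) and L̄ = (1/m)Σ_{j=1}^m L_j. Then for all x, y ∈ ℝ^d: (L̄/m)Σ_{j=1}^m (1/L_j)‖∇f_j(x) − ∇f_j(y)‖² ≤ 2 L̄ (F(x) − F(y) − ⟨∇F(y), x − y⟩). In particular, importance sampling (f_ξ = (L̄/L_j) f_j with probability L_j/(m L̄)) satisfies the expected smoothness property with constant 𝓛 = L̄. -/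
/-!
Each `f_j` is cocoercive: `‖∇f_j(x) - ∇f_j(y)‖² ≤ 2 L_j (f_j(x) - f_j(y) - ⟪∇f_j(y), x - y⟫)`.
To see this, evaluate both the supporting hyperplane of `f_j` at `y` and the quadratic upper
bound of `f_j` at `x` (the descent lemma) at the gradient step `x - (∇f_j(x) - ∇f_j(y)) / L_j`.
Dividing by `L_j` and averaging over `j` gives the claim, because the Bregman divergence of
`F` is the average of those of the `f_j`.
-/

open scoped BigOperators RealInnerProductSpace
open Set AffineMap

section NormedSpace

variable {E : Type*} [NormedAddCommGroup E] [NormedSpace ℝ E] {f : E → ℝ} {s : Set E}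

theorem ConvexOn.apply_sub_le_sub_of_hasFDerivAt (hconv : ConvexOn ℝ s f) {x y : E}
    (hx : x ∈ s) (hy : y ∈ s) {f' : E →L[ℝ] ℝ} (hf : HasFDerivAt f f' y) :
    f' (x - y) ≤ f x - f y := by
  have hline : HasDerivAt (f ∘ lineMap (k := ℝ) y x) (f' (x - y)) 0 :=
    (lineMap_apply_zero (k := ℝ) y x ▸ hf).comp_hasDerivAt 0 hasDerivAt_lineMap
  simpa [slope_def_field] using (hconv.comp_affineMap (lineMap y x)).le_slope_of_hasDerivAt
    (by simpa using hy) (by simpa using hx) zero_lt_one hline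

theorem sub_sub_fderiv_le_of_lipschitz_fderiv {f' : E → E →L[ℝ] ℝ}
    (hf : ∀ z, HasFDerivAt f (f' z) z) {L : ℝ} (hlip : ∀ z w, ‖f' z - f' w‖ ≤ L * ‖z - w‖)
    (x y : E) : f x - f y - f' y (x - y) ≤ L / 2 * ‖x - y‖ ^ 2 := by
  have hline (t : ℝ) : HasDerivAt (fun t => f (lineMap (k := ℝ) y x t) - t * f' y (x - y))
      (f' (lineMap y x t) (x - y) - f' y (x - y)) t :=
    ((hf _).comp_hasDerivAt t hasDerivAt_lineMap).sub (hasDerivAt_mul_const _)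
  have hbound (t : ℝ) : HasDerivAt (fun t => f y + L / 2 * t ^ 2 * ‖x - y‖ ^ 2)
      (L * t * ‖x - y‖ ^ 2) t := by
    refine ((((hasDerivAt_pow 2 t).const_mul (L / 2)).mul_const _).const_add _).congr_deriv ?_
    ring
  have hfence := image_le_of_deriv_right_le_deriv_boundary (a := 0) (b := 1)
    (fun t _ => (hline t).continuousAt.continuousWithinAt) (fun t _ => (hline t).hasDerivWithinAt)
    (by simp) (fun t _ => (hbound t).continuousAt.continuousWithinAt)
    (fun t _ => (hbound t).hasDerivWithinAt) (fun t ht => ?_) (right_mem_Icc.2 zero_le_one)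
  · simp only [lineMap_apply_one, one_mul, one_pow, mul_one] at hfence
    linarith
  · have hdist : ‖lineMap y x t - y‖ = t * ‖x - y‖ := by
      rw [lineMap_apply_module', add_sub_cancel_right, norm_smul, Real.norm_of_nonneg ht.1]
    calc f' (lineMap y x t) (x - y) - f' y (x - y) = (f' (lineMap y x t) - f' y) (x - y) := rfl
      _ ≤ ‖f' (lineMap y x t) - f' y‖ * ‖x - y‖ := le_of_abs_le ((f' _ - f' y).le_opNorm _)
      _ ≤ L * ‖lineMap y x t - y‖ * ‖x - y‖ := by gcongr; exact hlip _ _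
      _ = L * t * ‖x - y‖ ^ 2 := by rw [hdist]; ring

end NormedSpace

section InnerProductSpace

variable {E : Type*} [NormedAddCommGroup E] [InnerProductSpace ℝ E] [CompleteSpace E]

theorem ConvexOn.norm_sub_sq_le_of_hasGradientAt {f : E → ℝ} {g : E → E}
    (hconv : ConvexOn ℝ univ f) (hf : ∀ z, HasGradientAt f (g z) z) {L : ℝ} (hL : 0 < L)
    (hg : ∀ z w, ‖g z - g w‖ ≤ L * ‖z - w‖) (x y : E) :
    ‖g x - g y‖ ^ 2 ≤ 2 * L * (f x - f y - ⟪g y, x - y⟫) := by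
  set w := x - L⁻¹ • (g x - g y)
  have hf' (z : E) : HasFDerivAt f (InnerProductSpace.toDual ℝ E (g z)) z := (hf z).hasFDerivAt
  have hsupport : ⟪g y, w - y⟫ ≤ f w - f y :=
    hconv.apply_sub_le_sub_of_hasFDerivAt (mem_univ w) (mem_univ y) (hf' y)
  have hupper : f w - f x - ⟪g x, w - x⟫ ≤ L / 2 * ‖w - x‖ ^ 2 :=
    sub_sub_fderiv_le_of_lipschitz_fderiv hf' (fun z z' => by
      simpa only [← map_sub, LinearIsometryEquiv.norm_map] using hg z z') w x
  have hwx : w - x = -(L⁻¹ • (g x - g y)) := sub_sub_cancel_left _ _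
  have hstep : ⟪g y, w - y⟫ - ⟪g x, w - x⟫ = ⟪g y, x - y⟫ + L⁻¹ * ‖g x - g y‖ ^ 2 := by
    rw [show w - y = (x - y) + (w - x) by abel, inner_add_right, hwx, inner_neg_right,
      inner_neg_right, real_inner_smul_right, real_inner_smul_right, ← real_inner_self_eq_norm_sq,
      inner_sub_left]
    ring
  have hsq : ‖w - x‖ ^ 2 = L⁻¹ ^ 2 * ‖g x - g y‖ ^ 2 := by
    rw [hwx, norm_neg, norm_smul, mul_pow, Real.norm_of_nonneg (inv_nonneg.2 hL.le)]
  rw [hsq] at hupper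
  calc ‖g x - g y‖ ^ 2
      = 2 * L * (L⁻¹ * ‖g x - g y‖ ^ 2 - L / 2 * (L⁻¹ ^ 2 * ‖g x - g y‖ ^ 2)) := by
        field_simp; ring
    _ ≤ 2 * L * (f x - f y - ⟪g y, x - y⟫) :=
        mul_le_mul_of_nonneg_left (by linarith) (by positivity)

end InnerProductSpace

theorem expected_smoothness_importance_sampling_general
    (d m : ℕ)
    (f : Fin m → EuclideanSpace ℝ (Fin d) → ℝ)
    (g : Fin m → EuclideanSpace ℝ (Fin d) → EuclideanSpace ℝ (Fin d))
    (hdiff : ∀ j z, HasGradientAt (f j) (g j z) z)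
    (hconv : ∀ j, ConvexOn ℝ Set.univ (f j))
    (Lc : Fin m → ℝ) (hLpos : ∀ j, 0 < Lc j)
    (hsmooth : ∀ j z w, ‖g j z - g j w‖ ≤ Lc j * ‖z - w‖)
    (Lbar : ℝ) (hLbar : Lbar = (m : ℝ)⁻¹ * ∑ j, Lc j) :
    ∀ x y : EuclideanSpace ℝ (Fin d),
      Lbar / m * ∑ j, (Lc j)⁻¹ * ‖g j x - g j y‖ ^ 2
        ≤ 2 * Lbar * ((m : ℝ)⁻¹ * ∑ j, f j x - (m : ℝ)⁻¹ * ∑ j, f j y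
            - ⟪(m : ℝ)⁻¹ • ∑ j, g j y, x - y⟫) := by
  intro x y
  have hLbar_nonneg : 0 ≤ Lbar := by
    rw [hLbar]; exact mul_nonneg (by positivity) (Finset.sum_nonneg fun j _ => (hLpos j).le)
  have hcocoercive (j : Fin m) :
      (Lc j)⁻¹ * ‖g j x - g j y‖ ^ 2 ≤ 2 * (f j x - f j y - ⟪g j y, x - y⟫) := by
    rw [inv_mul_le_iff₀ (hLpos j)]
    linarith [(hconv j).norm_sub_sq_le_of_hasGradientAt (hdiff j) (hLpos j) (hsmooth j) x y]
  calc Lbar / m * ∑ j, (Lc j)⁻¹ * ‖g j x - g j y‖ ^ 2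
      ≤ Lbar / m * ∑ j, 2 * (f j x - f j y - ⟪g j y, x - y⟫) :=
        mul_le_mul_of_nonneg_left (Finset.sum_le_sum fun j _ => hcocoercive j) (by positivity)
    _ = _ := by
        rw [real_inner_smul_left, sum_inner, ← Finset.mul_sum, Finset.sum_sub_distrib,
          Finset.sum_sub_distrib]
        ring

/-- If `f_1,…,f_m` are convex and `L_j`-smooth with `L_j > 0`, `F = (1/m)Σ f_j`,
`L̄ = (1/m)Σ L_j`, then `(L̄/m)Σ_j (1/L_j)‖∇f_j(x) − ∇f_j(y)‖² ≤ 2 L̄ (F(x) − F(y) − ⟨∇F(y), x − y⟩)`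
for all `x, y`; i.e., importance sampling satisfies expected smoothness with `𝓛 = L̄`. -/
theorem expected_smoothness_importance_sampling
    (d m : ℕ) (hm : 0 < m)
    (f : Fin m → EuclideanSpace ℝ (Fin d) → ℝ)
    (g : Fin m → EuclideanSpace ℝ (Fin d) → EuclideanSpace ℝ (Fin d))
    (hdiff : ∀ j z, HasGradientAt (f j) (g j z) z)
    (hconv : ∀ j, ConvexOn ℝ Set.univ (f j))
    (Lc : Fin m → ℝ) (hLpos : ∀ j, 0 < Lc j)
    (hsmooth : ∀ j z w, ‖g j z - g j w‖ ≤ Lc j * ‖z - w‖)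
    (Lbar : ℝ) (hLbar : Lbar = (m : ℝ)⁻¹ * ∑ j, Lc j) :
    ∀ x y : EuclideanSpace ℝ (Fin d),
      Lbar / m * ∑ j, (Lc j)⁻¹ * ‖g j x - g j y‖ ^ 2
        ≤ 2 * Lbar * ((m : ℝ)⁻¹ * ∑ j, f j x - (m : ℝ)⁻¹ * ∑ j, f j y
            - ⟪(m : ℝ)⁻¹ • ∑ j, g j y, x - y⟫) :=
  expected_smoothness_importance_sampling_general d m f g hdiff hconv Lc hLpos hsmooth Lbar hLbar
end
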